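/- arXiv:1211.3005 — 2 statements merged into one kernel-verified Lean document; each statement's English description precedes it below -/
import Mathlib

section
/- For all x ≥ 0 and all β̂ ∈ [0,1), one has atanh(β̂ · tanh x) ≥ β̂·x − (β̂ / (3(1 − β̂²)))·x³. -/
/-!
Chain three crude bounds: `β̂ x - β̂ x³/(3(1 - β̂²)) ≤ β̂ (x - x³/3)`, then `x - x³/3 ≤ tanh x`,
then `y ≤ artanh y` on `[0, 1)`. Both inequalities for `tanh` follow from `tanh' = 1 - tanh²`:
`t - tanh t` has derivative `tanh² t ≥ 0`, and `tanh t - t + t³/3` has derivative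
`t² - tanh² t ≥ 0` for `t ≥ 0`; the bound on `artanh` is `tanh y ≤ y` read through `artanh`.
-/

/-- The inverse hyperbolic tangent. -/
noncomputable def artanh (x : ℝ) : ℝ := Real.log ((1 + x) / (1 - x)) / 2

theorem apply_zero_le_of_hasDerivAt_nonneg {f f' : ℝ → ℝ} (hf : ∀ t, HasDerivAt f (f' t) t)
    (hf' : ∀ t, 0 < t → 0 ≤ f' t) {x : ℝ} (hx : 0 ≤ x) : f 0 ≤ f x := by
  have hmono : MonotoneOn f (Set.Ici 0) := by
    refine monotoneOn_of_hasDerivWithinAt_nonneg (convex_Ici 0)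
      (fun t _ => (hf t).continuousAt.continuousWithinAt) (fun t _ => (hf t).hasDerivWithinAt) ?_
    rw [interior_Ici]
    exact hf'
  exact hmono Set.self_mem_Ici hx hx

namespace Real

theorem hasDerivAt_tanh (x : ℝ) : HasDerivAt tanh (1 - tanh x ^ 2) x := by
  have h := (hasDerivAt_sinh x).div (hasDerivAt_cosh x) (cosh_pos x).ne'
  rw [show tanh = sinh / cosh from funext fun y => tanh_eq_sinh_div_cosh y]
  refine h.congr_deriv ?_
  rw [Pi.div_apply]
  field_simp

theorem tanh_nonneg {x : ℝ} (hx : 0 ≤ x) : 0 ≤ tanh x := by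
  rw [tanh_eq_sinh_div_cosh]
  exact div_nonneg (sinh_nonneg_iff.2 hx) (cosh_pos x).le

theorem tanh_le_self {x : ℝ} (hx : 0 ≤ x) : tanh x ≤ x := by
  have h := apply_zero_le_of_hasDerivAt_nonneg (fun t => (hasDerivAt_id t).sub (hasDerivAt_tanh t))
    (fun t _ => by simp only [sub_sub_cancel]; positivity) hx
  simpa using h

theorem sub_pow_three_div_three_le_tanh {x : ℝ} (hx : 0 ≤ x) : x - x ^ 3 / 3 ≤ tanh x := by
  have h := apply_zero_le_of_hasDerivAt_nonneg
    (fun t => ((hasDerivAt_tanh t).sub (hasDerivAt_id t)).add ((hasDerivAt_pow 3 t).div_const 3))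
    (fun t ht => by
      have := tanh_le_self ht.le
      have := tanh_nonneg ht.le
      nlinarith) hx
  norm_num at h
  linarith

theorem self_le_artanh {y : ℝ} (hy0 : 0 ≤ y) (hy1 : y < 1) : y ≤ Real.artanh y := by
  conv_lhs => rw [← artanh_tanh y]
  exact artanh_le_artanh (neg_one_lt_tanh y) hy1 (tanh_le_self hy0)

end Real

theorem artanh_eq_real_artanh {y : ℝ} (hy : y ∈ Set.Icc (-1) 1) : artanh y = Real.artanh y := by
  rw [artanh, Real.artanh_eq_half_log hy]
  ring

/-- For all `x ≥ 0` and `β̂ ∈ [0,1)`,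
`atanh (β̂ * tanh x) ≥ β̂ * x - (β̂ / (3 * (1 - β̂^2))) * x^3`. -/
theorem lower_bound_xi (x b : ℝ) (hx : 0 ≤ x) (hb0 : 0 ≤ b) (hb1 : b < 1) :
    b * x - (b / (3 * (1 - b ^ 2))) * x ^ 3 ≤ artanh (b * Real.tanh x) := by
  have hy0 : 0 ≤ b * Real.tanh x := mul_nonneg hb0 (Real.tanh_nonneg hx)
  have hy1 : b * Real.tanh x < 1 := by nlinarith [Real.tanh_lt_one x]
  have hcoeff : b / 3 ≤ b / (3 * (1 - b ^ 2)) :=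
    div_le_div_of_nonneg_left hb0 (by nlinarith) (by nlinarith)
  calc b * x - (b / (3 * (1 - b ^ 2))) * x ^ 3
      ≤ b * (x - x ^ 3 / 3) := by nlinarith [pow_nonneg hx 3]
    _ ≤ b * Real.tanh x := mul_le_mul_of_nonneg_left (Real.sub_pow_three_div_three_le_tanh hx) hb0
    _ ≤ Real.artanh (b * Real.tanh x) := Real.self_le_artanh hy0 hy1
    _ = artanh (b * Real.tanh x) := (artanh_eq_real_artanh ⟨by linarith, hy1.le⟩).symm
end

section
/- The function x ↦ atanh(β̂ · tanh x) is concave on [0,∞) for every β̂ ∈ [0,1); equivalently, its second derivative ξ''(x) = −2β̂(1−β̂²)·tanh(x)·(1−tanh²x)/(1−β̂² tanh²x)² is nonpositive for x ≥ 0. -/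
/-!
With `t = tanh x` and `tanh' = 1 - t²`, the chain rule gives `ξ' = b (1 - t²) / (1 - b² t²)`, whose
derivative is the `ξ''` of the statement. For `0 ≤ b ≤ 1` and `x ≥ 0` every factor of `-ξ''` is
nonnegative, so the second derivative test gives concavity.
-/

open Real (tanh sinh cosh)

lemma Real.hasDerivAt_tanh_s2 (x : ℝ) : HasDerivAt tanh (1 - tanh x ^ 2) x := by
  have hcosh := (Real.cosh_pos x).ne'
  have h := (Real.hasDerivAt_sinh x).div (Real.hasDerivAt_cosh x) hcosh
  rw [show tanh = sinh / cosh from funext Real.tanh_eq_sinh_div_cosh]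
  refine h.congr_deriv ?_
  simp only [Pi.div_apply]
  field_simp

lemma Real.tanh_nonneg_s2 {x : ℝ} (hx : 0 ≤ x) : 0 ≤ tanh x := by
  rw [Real.tanh_eq_sinh_div_cosh]
  exact div_nonneg (Real.sinh_nonneg_iff.mpr hx) (Real.cosh_pos x).le

lemma hasDerivAt_artanh {y : ℝ} (hy : y ^ 2 < 1) : HasDerivAt artanh (1 / (1 - y ^ 2)) y := by
  have hplus : 1 + y ≠ 0 := by nlinarith
  have hminus : 1 - y ≠ 0 := by nlinarith
  have hquot := ((hasDerivAt_id y).const_add 1).div ((hasDerivAt_id y).const_sub 1) hminus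
  have hlog := (hquot.log (div_ne_zero hplus hminus)).div_const 2
  refine hlog.congr_deriv ?_
  have hsq : 1 - y ^ 2 ≠ 0 := by nlinarith
  simp only [id, Pi.div_apply]
  field_simp
  ring

lemma mul_tanh_sq_lt_one {b : ℝ} (hb : b ^ 2 ≤ 1) (x : ℝ) : b ^ 2 * tanh x ^ 2 < 1 := by
  nlinarith [Real.tanh_sq_lt_one x, sq_nonneg (tanh x)]

section xi

variable {b : ℝ}

noncomputable def xiDeriv (b x : ℝ) : ℝ := b * (1 - tanh x ^ 2) / (1 - b ^ 2 * tanh x ^ 2)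

noncomputable def xiDeriv2 (b x : ℝ) : ℝ :=
  -2 * b * (1 - b ^ 2) * tanh x * (1 - tanh x ^ 2) / (1 - b ^ 2 * tanh x ^ 2) ^ 2

lemma hasDerivAt_artanh_mul_tanh (hb : b ^ 2 ≤ 1) (x : ℝ) :
    HasDerivAt (fun x => artanh (b * tanh x)) (xiDeriv b x) x := by
  have hy : (b * tanh x) ^ 2 < 1 := by rw [mul_pow]; exact mul_tanh_sq_lt_one hb x
  have h := (hasDerivAt_artanh hy).comp x ((Real.hasDerivAt_tanh_s2 x).const_mul b)
  refine h.congr_deriv ?_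
  rw [xiDeriv, mul_pow]
  have := (sub_pos.mpr (mul_tanh_sq_lt_one hb x)).ne'
  field_simp

lemma hasDerivAt_xiDeriv (hb : b ^ 2 ≤ 1) (x : ℝ) :
    HasDerivAt (xiDeriv b) (xiDeriv2 b x) x := by
  have ht := Real.hasDerivAt_tanh_s2 x
  have hnum := ((ht.pow 2).const_sub 1).const_mul b
  have hden := (ht.pow 2).const_mul (b ^ 2) |>.const_sub 1
  have hne := (sub_pos.mpr (mul_tanh_sq_lt_one hb x)).ne'
  refine (hnum.div hden hne).congr_deriv ?_
  simp only [xiDeriv2, Pi.pow_apply]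
  field_simp
  ring

lemma xiDeriv2_nonpos (hb0 : 0 ≤ b) (hb1 : b ≤ 1) {x : ℝ} (hx : 0 ≤ x) : xiDeriv2 b x ≤ 0 := by
  have hsq : 0 ≤ 1 - b ^ 2 := by nlinarith
  have htanh : 0 ≤ 1 - tanh x ^ 2 := by linarith [Real.tanh_sq_lt_one x]
  have ht0 := Real.tanh_nonneg_s2 hx
  rw [xiDeriv2, neg_mul, neg_mul, neg_mul, neg_mul, neg_div]
  exact neg_nonpos.mpr (by positivity)

end xi

/-- For every `β̂ ∈ [0,1)`, the function `x ↦ atanh (β̂ * tanh x)` is concave on `[0,∞)`;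
equivalently, its second derivative
`ξ''(x) = -2β̂(1-β̂²) tanh x (1 - tanh² x)/(1 - β̂² tanh² x)²` is nonpositive for `x ≥ 0`. -/
theorem concave_xi (b : ℝ) (hb0 : 0 ≤ b) (hb1 : b < 1) :
    ConcaveOn ℝ (Set.Ici 0) (fun x => artanh (b * Real.tanh x)) ∧
    ∀ x : ℝ, 0 ≤ x →
      -2 * b * (1 - b ^ 2) * Real.tanh x * (1 - Real.tanh x ^ 2) /
          (1 - b ^ 2 * Real.tanh x ^ 2) ^ 2 ≤ 0 := by
  have hb : b ^ 2 ≤ 1 := by nlinarith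
  have hxi'' : ∀ x : ℝ, 0 ≤ x → xiDeriv2 b x ≤ 0 := fun x => xiDeriv2_nonpos hb0 hb1.le
  refine ⟨?_, hxi''⟩
  refine concaveOn_of_hasDerivWithinAt2_nonpos (convex_Ici 0)
    (HasDerivAt.continuousOn fun x _ => hasDerivAt_artanh_mul_tanh hb x)
    (fun x _ => (hasDerivAt_artanh_mul_tanh hb x).hasDerivWithinAt)
    (fun x _ => (hasDerivAt_xiDeriv hb x).hasDerivWithinAt)
    fun x hx => hxi'' x (interior_subset hx)
end
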